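/- arXiv:2109.04519 — 2 statements merged into one kernel-verified Lean document; each statement's English description precedes it below -/
import Mathlib

section
/- Let k be an integer with k ≤ −1, and let a_0, a_1, …, a_{α_t} be the unique rational numbers such that N(I,n) = Σ_{i=0}^{α_t} a_i · C(n+k, i) for every positive integer n, where for an integer a and nonnegative integer i, C(a,i) = a(a−1)⋯(a−i+1)/i! denotes the generalized binomial coefficient. Then a_i ≥ 0 for every i with 0 ≤ i ≤ α_t. -/
open Finset

/-- Sequences of length `ℓ` (positions `1..ℓ`) with entries in `{1,…,n}`,
encoded as functions `ℕ → ℕ` vanishing outside `[1, ℓ]`. -/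
def Seqs (ℓ n : ℕ) : Set (ℕ → ℕ) :=
  {v | (∀ i ∈ Finset.Icc 1 ℓ, v i ∈ Finset.Icc 1 n) ∧ ∀ i, i ∉ Finset.Icc 1 ℓ → v i = 0}

/-- Descent set of a sequence of length `ℓ`:
`Des(v) = {i ∈ {1,…,ℓ-1} : v_i > v_{i+1}}`. -/
def Des (ℓ : ℕ) (v : ℕ → ℕ) : Set ℕ :=
  {i | 1 ≤ i ∧ i < ℓ ∧ v (i + 1) < v i}

/-- Number of occurrences of the value `j` among positions `1..ℓ` of `v`. -/
def mult (ℓ : ℕ) (v : ℕ → ℕ) (j : ℕ) : ℕ :=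
  ((Finset.Icc 1 ℓ).filter fun i => v i = j).card

/-- `𝔡^m(I, n)`: the number of sequences of length `n*m`, in which each of `1,…,n`
appears exactly `m` times, whose descent set is `I`. -/
noncomputable def dP (m : ℕ) (I : Finset ℕ) (n : ℕ) : ℕ :=
  Set.ncard {w ∈ Seqs (n * m) n |
    Des (n * m) w = ↑I ∧ ∀ j ∈ Finset.Icc 1 n, mult (n * m) w j = m}

/-- `N(I, n)`: the number of sequences `v = (v_1, …, v_{α_t})` with entries in `{1,…,n}`
such that `Des v = I \ {α_t}` and `v_{α_t} ≠ 1`. -/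
noncomputable def Ncount (I : Finset ℕ) (n : ℕ) : ℕ :=
  Set.ncard {v ∈ Seqs (I.sup id) n |
    Des (I.sup id) v = ↑(I.erase (I.sup id)) ∧ v (I.sup id) ≠ 1}

/-- `D^m(I, n)`: the number of sequences `v = (v_1, …, v_{α_t})` with entries in `{1,…,n}`
such that `Des v = I \ {α_t}` and each of `1,…,n` appears at most `m` times in `v`. -/
noncomputable def Dcount (m : ℕ) (I : Finset ℕ) (n : ℕ) : ℕ :=
  Set.ncard {v ∈ Seqs (I.sup id) n |
    Des (I.sup id) v = ↑(I.erase (I.sup id)) ∧ ∀ j ∈ Finset.Icc 1 n, mult (I.sup id) v j ≤ m}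

/-- `b_i(I)`: the number of sequences `v = (v_1, …, v_{α_t})` with entries in `{1,…,i+1}`
such that `Des v = I \ {α_t}`, every number in `{2,…,i+1}` occurs in `v`, and `v_{α_t} ≠ 1`. -/
noncomputable def bcoef (I : Finset ℕ) (i : ℕ) : ℕ :=
  Set.ncard {v ∈ Seqs (I.sup id) (i + 1) |
    Des (I.sup id) v = ↑(I.erase (I.sup id)) ∧
    (∀ l ∈ Finset.Icc 2 (i + 1), ∃ j ∈ Finset.Icc 1 (I.sup id), v j = l) ∧
    v (I.sup id) ≠ 1}

/-- `L(I)`: the length of the longest run of consecutive integers contained in `I`. -/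
def longestRun (I : Finset ℕ) : ℕ :=
  I.sup fun a => ((Finset.Icc a (I.sup id)).filter fun b => Finset.Icc a b ⊆ I).card

/-- `alphaVal I k` is the `k`-th smallest element of `I` (`1`-indexed), with `alphaVal I 0 = 0`. -/
def alphaVal (I : Finset ℕ) (k : ℕ) : ℕ :=
  if k = 0 then 0 else (I.sort (· ≤ ·)).getD (k - 1) 0

/-- For a composition `A = (a_1,…,a_s)` of `t = |I|`, `sigmaC I A i` is
`σ_{i+1} = β_{a_1+⋯+a_i+1} + ⋯ + β_{a_1+⋯+a_{i+1}}`, where `β` is the sequence of first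
differences of `(0, α_1, …, α_t)`; by telescoping this equals
`α_{a_1+⋯+a_{i+1}} - α_{a_1+⋯+a_i}`. -/
def sigmaC (I : Finset ℕ) {t : ℕ} (A : Composition t) (i : ℕ) : ℕ :=
  alphaVal I (A.sizeUpTo (i + 1)) - alphaVal I (A.sizeUpTo i)

/-- `C(A, I)` for a composition `A = (a_1,…,a_r)`: the number of sequences
`v = (v_1, …, v_{α_t})` with entries in `{1,…,r}` such that `Des v = I \ {α_t}`
and the number `j` appears exactly `a_j` times in `v`, for each `j ∈ {1,…,r}`. -/
noncomputable def Ccount (I : Finset ℕ) {N : ℕ} (A : Composition N) : ℕ :=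
  Set.ncard {v ∈ Seqs (I.sup id) A.length |
    Des (I.sup id) v = ↑(I.erase (I.sup id)) ∧
    ∀ j ∈ Finset.Icc 1 A.length, mult (I.sup id) v j = A.blocks.getD (j - 1) 0}

/-- The generalized binomial coefficient `C(a, i) = a(a-1)⋯(a-i+1)/i!` for an integer `a`. -/
def genChoose (a : ℤ) (i : ℕ) : ℚ :=
  (∏ j ∈ Finset.range i, ((a : ℚ) - (j : ℚ))) / (Nat.factorial i)

/-!
Classifying the sequences counted by `N(I, n)` by the set `S ⊆ {2,…,n}` of their entries other
than `1`, and relabelling `{1} ∪ S` order-preservingly onto `{1,…,|S|+1}`, gives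
`N(I, n) = ∑ₘ bₘ(I) C(n-1, m)`, where `bₘ(I)` counts the sequences attaining every value of
`{2,…,m+1}`. Write `n = s + m₀ + 1` with `m₀ = -1 - k ≥ 0`, so that `C(n+k, i) = C(s, i)`.
Vandermonde's identity `C(m₀ + s, j) = ∑ᵢ C(m₀, j-i) C(s, i)` rewrites the count in the basis
`C(s, i)`, and since coefficients in this basis are unique,
`aᵢ = ∑ⱼ bⱼ(I) C(m₀, j-i) ≥ 0`.
-/

lemma Set.ncard_eq_sum_ncard_fiberwise {α β : Type*} [DecidableEq β] {s : Set α}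
    (hs : s.Finite) {t : Finset β} {f : α → β} (hf : Set.MapsTo f s t) :
    s.ncard = ∑ b ∈ t, {a ∈ s | f a = b}.ncard := by
  classical
  rw [Set.ncard_eq_toFinset_card _ hs,
    card_eq_sum_card_fiberwise fun a ha => hf (by simpa using ha)]
  refine sum_congr rfl fun b _ => ?_
  rw [← Set.ncard_coe_finset]
  congr
  ext
  simp

lemma strictMonoOn_card_filter_le {α : Type*} [LinearOrder α] (V : Finset α) :
    StrictMonoOn (fun x => #{y ∈ V | y ≤ x}) V := by
  intro x _ y hy hxy
  refine card_lt_card ⟨fun z hz => ?_, fun h => ?_⟩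
  · rw [mem_filter] at hz ⊢
    exact ⟨hz.1, hz.2.trans hxy.le⟩
  · exact hxy.not_ge (mem_filter.1 (h (mem_filter.2 ⟨hy, le_rfl⟩))).2

lemma image_card_filter_le {α : Type*} [LinearOrder α] (V : Finset α) :
    (fun x => #{y ∈ V | y ≤ x}) '' V = Icc 1 #V := by
  have hmaps : Set.MapsTo (fun x => #{y ∈ V | y ≤ x}) V (Icc 1 #V) := fun x hx =>
    mem_Icc.2 ⟨card_pos.2 ⟨x, mem_filter.2 ⟨hx, le_rfl⟩⟩, card_filter_le _ _⟩
  exact (surjOn_of_injOn_of_card_le _ hmaps (strictMonoOn_card_filter_le V).injOn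
    (by simp)).image_eq_of_mapsTo hmaps

lemma genChoose_natCast (s i : ℕ) : genChoose s i = s.choose i := by
  rw [genChoose, Int.cast_natCast, ← descPochhammer_eval_eq_prod_range,
    descPochhammer_eval_eq_descFactorial, Nat.descFactorial_eq_factorial_mul_choose, Nat.cast_mul,
    mul_div_cancel_left₀ _ (by positivity)]

lemma sum_mul_add_choose {R : Type*} [CommSemiring R] (b : ℕ → R) (m s L : ℕ) :
    ∑ j ∈ range L, b j * ((m + s).choose j : R) =
      ∑ i ∈ range L, (∑ j ∈ Ico i L, b j * m.choose (j - i)) * s.choose i := by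
  have vandermonde (j : ℕ) :
      ((m + s).choose j : R) = ∑ i ∈ range (j + 1), (m.choose (j - i) : R) * s.choose i := by
    rw [add_comm, Nat.add_choose_eq,
      Nat.sum_antidiagonal_eq_sum_range_succ fun p q => s.choose p * m.choose q]
    push_cast
    exact sum_congr rfl fun _ _ => mul_comm _ _
  simp_rw [vandermonde, mul_sum, sum_mul, mul_assoc]
  exact sum_comm' fun j i => by simp only [mem_range, mem_Ico]; omega

lemma eq_of_forall_sum_mul_choose_eq {R : Type*} [Ring R] {c d : ℕ → R} {L : ℕ}
    (h : ∀ s : ℕ, ∑ i ∈ range L, c i * s.choose i = ∑ i ∈ range L, d i * s.choose i) :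
    ∀ i < L, c i = d i := by
  intro i
  induction i using Nat.strong_induction_on with
  | _ i ih =>
    intro hi
    have hs := h i
    rw [← sub_eq_zero, ← sum_sub_distrib, sum_eq_single i] at hs
    · simpa [sub_eq_zero, ← sub_mul] using hs
    · intro j hj hji
      rcases lt_or_gt_of_ne hji with hlt | hgt
      · rw [ih j hlt (by simpa using hj), sub_self]
      · simp [Nat.choose_eq_zero_of_lt hgt]
    · simp [hi]

def DesSeqs (ℓ : ℕ) (D V : Finset ℕ) : Set (ℕ → ℕ) :=
  {v | (∀ i ∈ Icc 1 ℓ, v i ∈ V) ∧ (∀ i ∉ Icc 1 ℓ, v i = 0) ∧ Des ℓ v = D ∧ v ℓ ≠ 1}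

def DesSeqsOnto (ℓ : ℕ) (D V : Finset ℕ) : Set (ℕ → ℕ) :=
  {v ∈ DesSeqs ℓ D V | V.erase 1 ⊆ (Icc 1 ℓ).image v}

section DesSeqs

variable {ℓ : ℕ} {D V W : Finset ℕ}

lemma desSeqs_finite : (DesSeqs ℓ D V).Finite := by
  have hpi : (Set.univ.pi fun _ : Fin (ℓ + 1) => (↑(insert 0 V) : Set ℕ)).Finite :=
    Set.Finite.pi fun _ => finite_toSet _
  refine .of_finite_image (f := fun v (i : Fin (ℓ + 1)) => v i) (hpi.subset ?_) ?_
  · rintro _ ⟨v, hv, rfl⟩ i -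
    by_cases hi : (i : ℕ) ∈ Icc 1 ℓ
    · simp [hv.1 _ hi]
    · simp [hv.2.1 _ hi]
  · intro v hv w hw h
    funext i
    by_cases hi : i ∈ Icc 1 ℓ
    · exact congrFun h ⟨i, by grind⟩
    · rw [hv.2.1 i hi, hw.2.1 i hi]

lemma desSeqsOnto_eq_empty (h : ℓ + 1 < #V) : DesSeqsOnto ℓ D V = ∅ := by
  refine Set.eq_empty_of_forall_notMem fun v ⟨_, honto⟩ => ?_
  have := (card_le_card honto).trans card_image_le
  have := pred_card_le_card_erase (s := V) (a := 1)
  simp only [Nat.card_Icc] at *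
  omega

def relabel (ℓ : ℕ) (e v : ℕ → ℕ) : ℕ → ℕ :=
  fun i => if i ∈ Icc 1 ℓ then e (v i) else 0

lemma des_relabel {e v : ℕ → ℕ} (he : StrictMonoOn e V) (hv : ∀ i ∈ Icc 1 ℓ, v i ∈ V) :
    Des ℓ (relabel ℓ e v) = Des ℓ v := by
  ext i
  simp only [Des, Set.mem_ofPred_eq, relabel]
  refine and_congr_right fun hi1 => and_congr_right fun hiℓ => ?_
  have hi : i ∈ Icc 1 ℓ := mem_Icc.2 ⟨hi1, hiℓ.le⟩
  have hi' : i + 1 ∈ Icc 1 ℓ := mem_Icc.2 ⟨by omega, hiℓ⟩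
  rw [if_pos hi, if_pos hi']
  exact he.lt_iff_lt (hv _ hi') (hv _ hi)

lemma relabel_mapsTo {e : ℕ → ℕ} (h1 : 1 ∈ V) (he1 : e 1 = 1) (he : StrictMonoOn e V)
    (hVW : e '' V = W) : Set.MapsTo (relabel ℓ e) (DesSeqsOnto ℓ D V) (DesSeqsOnto ℓ D W) := by
  rintro v ⟨⟨hval, hzero, hdes, hlast⟩, honto⟩
  refine ⟨⟨fun i hi => ?_, fun i hi => if_neg hi, (des_relabel he hval).trans hdes, ?_⟩, ?_⟩
  · rw [relabel, if_pos hi, ← mem_coe, ← hVW]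
    exact Set.mem_image_of_mem e (hval i hi)
  · unfold relabel
    split_ifs with hℓ
    · rw [← he1]
      exact fun h => hlast (he.injOn (hval ℓ hℓ) h1 h)
    · exact zero_ne_one
  · intro y hy
    obtain ⟨hy1, hyW⟩ := mem_erase.1 hy
    obtain ⟨x, hxV, rfl⟩ : y ∈ e '' V := hVW ▸ hyW
    obtain ⟨i, hi, rfl⟩ := mem_image.1 (honto (mem_erase.2 ⟨fun h => hy1 (h ▸ he1), hxV⟩))
    exact mem_image.2 ⟨i, hi, if_pos hi⟩

lemma relabel_relabel_of_leftInvOn {e g v : ℕ → ℕ} (hinv : Set.LeftInvOn g e V)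
    (hval : ∀ i ∈ Icc 1 ℓ, v i ∈ V) (hzero : ∀ i ∉ Icc 1 ℓ, v i = 0) :
    relabel ℓ g (relabel ℓ e v) = v := by
  funext i
  unfold relabel
  split_ifs with hi
  · exact hinv (hval i hi)
  · exact (hzero i hi).symm

lemma ncard_desSeqsOnto_eq_of_strictMonoOn {e : ℕ → ℕ} (h1 : 1 ∈ V) (he1 : e 1 = 1)
    (he : StrictMonoOn e V) (hVW : e '' V = W) :
    (DesSeqsOnto ℓ D V).ncard = (DesSeqsOnto ℓ D W).ncard := by
  have hbij : Set.BijOn e V W := hVW ▸ he.injOn.bijOn_image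
  set g := Function.invFunOn e V
  have hinv : Set.InvOn g e V W := hbij.invOn_invFunOn
  have hbij' : Set.BijOn g W V := hbij.symm hinv.symm
  have hg : StrictMonoOn g W := fun x hx y hy hxy =>
    (he.lt_iff_lt (hbij'.mapsTo hx) (hbij'.mapsTo hy)).1 (by rwa [hinv.2 hx, hinv.2 hy])
  have hg1 : g 1 = 1 := by simpa [he1] using hinv.1 h1
  have h1W : (1 : ℕ) ∈ W := by simpa [he1] using hbij.mapsTo h1
  refine (Set.InvOn.bijOn ⟨?_, ?_⟩ (relabel_mapsTo h1 he1 he hVW)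
    (relabel_mapsTo h1W hg1 hg hbij'.image_eq)).ncard_eq
  · exact fun v hv => relabel_relabel_of_leftInvOn hinv.1 hv.1.1 hv.1.2.1
  · exact fun w hw => relabel_relabel_of_leftInvOn hinv.2 hw.1.1 hw.1.2.1

lemma ncard_desSeqsOnto_eq_Icc (h1 : 1 ∈ V) (hV : ∀ x ∈ V, 1 ≤ x) :
    (DesSeqsOnto ℓ D V).ncard = (DesSeqsOnto ℓ D (Icc 1 #V)).ncard := by
  refine ncard_desSeqsOnto_eq_of_strictMonoOn h1 ?_ (strictMonoOn_card_filter_le V)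
    (image_card_filter_le V)
  rw [card_eq_one]
  exact ⟨1, by ext x; simp only [mem_filter, mem_singleton]; grind⟩

lemma desSeqs_fiber {n : ℕ} (hn : 1 ≤ n) {S : Finset ℕ} (hS : S ⊆ Icc 2 n) :
    {v ∈ DesSeqs ℓ D (Icc 1 n) | ((Icc 1 ℓ).image v).erase 1 = S} =
      DesSeqsOnto ℓ D (insert 1 S) := by
  have h1S : 1 ∉ S := fun h => by simpa using hS h
  have hSn : insert 1 S ⊆ Icc 1 n :=
    insert_subset (by simpa using hn) (hS.trans (Icc_subset_Icc_left one_le_two))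
  ext v
  simp only [DesSeqsOnto, DesSeqs, Set.mem_ofPred_eq, erase_insert h1S, ← image_subset_iff]
  constructor
  · rintro ⟨⟨hval, hrest⟩, rfl⟩
    exact ⟨⟨subset_insert_iff.2 subset_rfl, hrest⟩, erase_subset _ _⟩
  · rintro ⟨⟨hval, hrest⟩, honto⟩
    refine ⟨⟨hval.trans hSn, hrest⟩, subset_antisymm (subset_insert_iff.1 hval) ?_⟩
    exact subset_erase.2 ⟨honto, h1S⟩

lemma ncard_desSeqs_eq_sum_powerset {n : ℕ} (hn : 1 ≤ n) :
    (DesSeqs ℓ D (Icc 1 n)).ncard =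
      ∑ S ∈ (Icc 2 n).powerset, (DesSeqsOnto ℓ D (insert 1 S)).ncard := by
  have hmaps : Set.MapsTo (fun v => ((Icc 1 ℓ).image v).erase 1) (DesSeqs ℓ D (Icc 1 n))
      (Icc 2 n).powerset := by
    intro v hv
    simp only [coe_powerset, Set.mem_preimage, Set.mem_powerset_iff, coe_subset]
    intro x hx
    obtain ⟨hx1, i, hi, rfl⟩ := by simpa using hx
    have := mem_Icc.1 (hv.1 i (by simpa using hi))
    exact mem_Icc.2 ⟨by omega, this.2⟩
  rw [Set.ncard_eq_sum_ncard_fiberwise desSeqs_finite hmaps]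
  exact sum_congr rfl fun S hS => by rw [desSeqs_fiber hn (mem_powerset.1 hS)]

end DesSeqs

lemma ncard_desSeqs_eq_sum_choose_mul {n : ℕ} (hn : 1 ≤ n) (ℓ : ℕ) (D : Finset ℕ) :
    (DesSeqs ℓ D (Icc 1 n)).ncard =
      ∑ m ∈ range (ℓ + 1), (n - 1).choose m * (DesSeqsOnto ℓ D (Icc 1 (m + 1))).ncard := by
  calc (DesSeqs ℓ D (Icc 1 n)).ncard
      = ∑ S ∈ (Icc 2 n).powerset, (DesSeqsOnto ℓ D (Icc 1 (#S + 1))).ncard := by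
        rw [ncard_desSeqs_eq_sum_powerset hn]
        refine sum_congr rfl fun S hS => ?_
        have h1S : 1 ∉ S := fun h => by simpa using mem_powerset.1 hS h
        rw [ncard_desSeqsOnto_eq_Icc (mem_insert_self 1 S), card_insert_of_notMem h1S]
        intro x hx
        rcases mem_insert.1 hx with rfl | hx
        · rfl
        · exact (mem_Icc.1 (mem_powerset.1 hS hx)).1.trans' one_le_two
    _ = ∑ m ∈ range (n - 1 + 1), (n - 1).choose m * (DesSeqsOnto ℓ D (Icc 1 (m + 1))).ncard := by
        rw [sum_powerset_apply_card fun m => (DesSeqsOnto ℓ D (Icc 1 (m + 1))).ncard,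
          Nat.card_Icc, show n + 1 - 2 = n - 1 by omega]
        rfl
    _ = _ := by
        rw [sum_subset (range_subset_range.2 (Nat.le_add_right (n - 1 + 1) (ℓ + 1)))
            fun m _ hm => by rw [Nat.choose_eq_zero_of_lt (by simp at hm; omega), zero_mul],
          sum_subset (range_subset_range.2 (Nat.le_add_left (ℓ + 1) (n - 1 + 1)))
            fun m _ hm => by
              rw [desSeqsOnto_eq_empty (by simp at hm ⊢; omega), Set.ncard_empty, mul_zero]]

lemma ncount_eq_ncard_desSeqs (I : Finset ℕ) (n : ℕ) :
    Ncount I n = (DesSeqs (I.sup id) (I.erase (I.sup id)) (Icc 1 n)).ncard := by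
  simp only [Ncount, DesSeqs, Seqs]
  exact congrArg _ (Set.ext fun v => and_assoc)

lemma bcoef_eq_ncard_desSeqsOnto (I : Finset ℕ) (m : ℕ) :
    bcoef I m = (DesSeqsOnto (I.sup id) (I.erase (I.sup id)) (Icc 1 (m + 1))).ncard := by
  have : (Icc 1 (m + 1)).erase 1 = Icc 2 (m + 1) := by ext; simp; omega
  simp only [bcoef, DesSeqsOnto, DesSeqs, Seqs, this, subset_iff, mem_image]
  congr
  ext v
  simp only [Set.mem_ofPred_eq]
  tauto

lemma ncount_eq_sum_choose_mul_bcoef (I : Finset ℕ) {n : ℕ} (hn : 1 ≤ n) :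
    Ncount I n = ∑ m ∈ range (I.sup id + 1), (n - 1).choose m * bcoef I m := by
  simp only [ncount_eq_ncard_desSeqs, bcoef_eq_ncard_desSeqsOnto,
    ncard_desSeqs_eq_sum_choose_mul hn]

theorem stmt_16_general (I : Finset ℕ)
    (k : ℤ) (hk : k ≤ -1) (a : ℕ → ℚ)
    (ha : ∀ n : ℕ, 1 ≤ n →
      (Ncount I n : ℚ) =
        ∑ i ∈ Finset.range (I.sup id + 1), a i * genChoose ((n : ℤ) + k) i) :
    ∀ i ≤ I.sup id, 0 ≤ a i := by
  obtain ⟨m, rfl⟩ : ∃ m : ℕ, k = -1 - m := ⟨(-1 - k).toNat, by omega⟩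
  have hcoeff (s : ℕ) : ∑ i ∈ range (I.sup id + 1), a i * s.choose i =
      ∑ i ∈ range (I.sup id + 1),
        (∑ j ∈ Ico i (I.sup id + 1), (bcoef I j : ℚ) * m.choose (j - i)) * s.choose i := by
    have hN := ha (s + m + 1) (by omega)
    rw [show ((s + m + 1 : ℕ) : ℤ) + (-1 - m) = s by push_cast; ring] at hN
    simp only [genChoose_natCast] at hN
    rw [← hN, ← sum_mul_add_choose, ncount_eq_sum_choose_mul_bcoef I (by omega), add_comm m,
      Nat.add_sub_cancel]
    push_cast
    exact sum_congr rfl fun _ _ => mul_comm _ _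
  intro i hi
  rw [eq_of_forall_sum_mul_choose_eq hcoeff i (by omega)]
  positivity

/-- if `k ≤ -1` and `a_0,…,a_{α_t}` are the coefficients of `N(I,n)` in the
basis `(C(n+k, i))_i` of generalized binomial coefficients, then all `a_i` are nonnegative. -/
theorem stmt_16 (I : Finset ℕ) (hI : I.Nonempty) (hIpos : ∀ x ∈ I, 1 ≤ x)
    (k : ℤ) (hk : k ≤ -1) (a : ℕ → ℚ)
    (ha : ∀ n : ℕ, 1 ≤ n →
      (Ncount I n : ℚ) =
        ∑ i ∈ Finset.range (I.sup id + 1), a i * genChoose ((n : ℤ) + k) i) :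
    ∀ i ≤ I.sup id, 0 ≤ a i :=
  stmt_16_general I k hk a ha
end

section
/- Suppose t ≥ 2, and let I^- = I \ {α_t} (a non-empty finite set with max α_{t−1}). Then c_0(I) = −c_0(I^-), where c_0(I^-) is the constant coefficient in the expansion of N(I^-, n) in the binomial basis, defined analogously to c_0(I). -/
open Finset

/-! Put `M = α_t`, `J = I⁻ = I \ {M}` and `m = max J = α_{t-1}`. A sequence of length `M` with
descent set `J` either has `v_M ≠ 1`, and is counted by `N(I, n)`, or has `v_M = 1`; in the second
case there is no descent after `m`, so `v_{m+1} = ⋯ = v_M = 1`, and cutting the sequence after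
position `m` is a bijection onto the sequences counted by `N(I⁻, n)`. Hence
`N(I, n) + N(I⁻, n) = P(n)`, the number of sequences of length `M` over `{1,…,n}` with descent
set `J`. Sorting these by their set of values and relabelling the values order-preservingly gives
`P(n) = ∑ᵢ C(n,i) Eᵢ`, where `Eᵢ` counts those with set of values `{1,…,i}`; so `P` is a
polynomial in `n`, and `P(0) = 0`. The binomial expansions of `N(I, ·)` and `N(I⁻, ·)` agree with
polynomials at all `n ≥ 1`, hence everywhere, and evaluating at `n = 0` gives `c₀(I) + c₀(I⁻) = 0`.
-/

open Polynomial

open scoped Classical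

section BinomialBasis

variable {K : Type*} [Field K] [CharZero K]

theorem exists_eval_eq_sum_mul_choose (a : ℕ → K) (s : Finset ℕ) :
    ∃ p : K[X], ∀ n : ℕ, p.eval (n : K) = ∑ i ∈ s, a i * n.choose i := by
  refine ⟨∑ i ∈ s, C (a i / i.factorial) * descPochhammer K i, fun n => ?_⟩
  simp only [eval_finsetSum, eval_mul, eval_C, descPochhammer_eval_eq_descFactorial,
    Nat.descFactorial_eq_factorial_mul_choose, Nat.cast_mul]
  refine sum_congr rfl fun i _ => ?_
  rw [div_mul_eq_mul_div, mul_left_comm, mul_div_cancel_left₀ _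
    (Nat.cast_ne_zero.2 i.factorial_ne_zero)]

theorem sum_range_mul_choose_zero (a : ℕ → K) (r : ℕ) :
    ∑ i ∈ range (r + 1), a i * (Nat.choose 0 i : K) = a 0 := by
  simp [sum_range_succ']

end BinomialBasis

theorem Polynomial.eq_of_eval_natCast_eq {R : Type*} [CommRing R] [IsDomain R] [CharZero R]
    {p q : R[X]} (h : ∀ n : ℕ, 1 ≤ n → p.eval (n : R) = q.eval (n : R)) : p = q :=
  eq_of_infinite_eval_eq p q <|
    Set.infinite_of_injective_forall_mem (f := fun n : ℕ => ((n + 1 : ℕ) : R))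
      (fun a b hab => by simpa using hab) fun n => h (n + 1) (by omega)

noncomputable def seqsFinset (ℓ n : ℕ) : Finset (ℕ → ℕ) :=
  ((Icc 1 ℓ).pi fun _ => Icc 1 n).image fun f i => if h : i ∈ Icc 1 ℓ then f i h else 0

theorem mem_seqsFinset {ℓ n : ℕ} {v : ℕ → ℕ} : v ∈ seqsFinset ℓ n ↔ v ∈ Seqs ℓ n := by
  constructor
  · simp only [seqsFinset, mem_image, mem_pi]
    rintro ⟨f, hf, rfl⟩
    exact ⟨fun i hi => by simp [hi, hf i hi], fun i hi => by simp [hi]⟩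
  · rintro ⟨hrange, hzero⟩
    simp only [seqsFinset, mem_image, mem_pi]
    refine ⟨fun i _ => v i, hrange, funext fun i => ?_⟩
    by_cases hi : i ∈ Icc 1 ℓ
    · simp [hi]
    · simp [hi, hzero i hi]

theorem ncard_seqs_filter (ℓ n : ℕ) (P : (ℕ → ℕ) → Prop) [DecidablePred P] :
    {v ∈ Seqs ℓ n | P v}.ncard = #{v ∈ seqsFinset ℓ n | P v} := by
  rw [← Set.ncard_coe_finset]
  congr 1
  ext v
  simp [mem_seqsFinset]

theorem seqsFinset_zero {ℓ : ℕ} (hℓ : 1 ≤ ℓ) : seqsFinset ℓ 0 = ∅ := by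
  refine eq_empty_of_forall_notMem fun v hv => ?_
  simpa using (mem_seqsFinset.1 hv).1 1 (by simp [hℓ])

section Descents

variable {ℓ : ℕ} {v w : ℕ → ℕ}

theorem Des_congr (h : ∀ p, 1 ≤ p → p ≤ ℓ → v p = w p) : Des ℓ v = Des ℓ w := by
  ext i
  refine and_congr_right fun hi => and_congr_right fun hiℓ => ?_
  rw [h i hi hiℓ.le, h (i + 1) (by omega) hiℓ]

theorem Des_of_le {m : ℕ} (h : m ≤ ℓ) (v : ℕ → ℕ) : Des m v = {i ∈ Des ℓ v | i < m} := by
  ext i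
  simp only [Des, Set.mem_ofPred_eq]
  constructor
  · rintro ⟨h1, h2, h3⟩
    exact ⟨⟨h1, by omega, h3⟩, h2⟩
  · rintro ⟨⟨h1, -, h3⟩, h2⟩
    exact ⟨h1, h2, h3⟩

theorem Des_comp {f : ℕ → ℕ} {s : Set ℕ} (hf : StrictMonoOn f s)
    (hv : ∀ p ∈ Icc 1 ℓ, v p ∈ s) : Des ℓ (f ∘ v) = Des ℓ v := by
  ext i
  refine and_congr_right fun hi => and_congr_right fun hiℓ => ?_
  exact hf.lt_iff_lt (hv _ (by simp; omega)) (hv _ (by simp; omega))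

end Descents

section Relabel

variable {S T : Finset ℕ}

def extendByZero (e : S ≃o T) (x : ℕ) : ℕ := if h : x ∈ S then e ⟨x, h⟩ else 0

theorem extendByZero_of_mem (e : S ≃o T) {x : ℕ} (hx : x ∈ S) :
    extendByZero e x = e ⟨x, hx⟩ :=
  dif_pos hx

theorem extendByZero_of_notMem (e : S ≃o T) {x : ℕ} (hx : x ∉ S) : extendByZero e x = 0 :=
  dif_neg hx

theorem extendByZero_mem (e : S ≃o T) {x : ℕ} (hx : x ∈ S) : extendByZero e x ∈ T := by
  rw [extendByZero_of_mem e hx]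
  exact (e _).2

theorem strictMonoOn_extendByZero (e : S ≃o T) : StrictMonoOn (extendByZero e) S :=
  fun x hx y hy hxy => by
    rw [extendByZero_of_mem e hx, extendByZero_of_mem e hy]
    exact e.strictMono hxy

theorem extendByZero_symm_extendByZero (e : S ≃o T) {x : ℕ} (hx : x ∈ S) :
    extendByZero e.symm (extendByZero e x) = x := by
  rw [extendByZero_of_mem e hx, extendByZero_of_mem e.symm (e _).2]
  simp

theorem image_extendByZero (e : S ≃o T) : S.image (extendByZero e) = T := by
  ext y
  refine ⟨fun hy => ?_, fun hy => ?_⟩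
  · obtain ⟨x, hx, rfl⟩ := mem_image.1 hy
    exact extendByZero_mem e hx
  · exact mem_image.2 ⟨_, extendByZero_mem e.symm hy,
      by simpa using extendByZero_symm_extendByZero e.symm hy⟩

end Relabel

noncomputable def valueFiber (J : Finset ℕ) (ℓ n : ℕ) (S : Finset ℕ) : Finset (ℕ → ℕ) :=
  {v ∈ seqsFinset ℓ n | Des ℓ v = ↑J ∧ (Icc 1 ℓ).image v = S}

section ValueFiber

variable {J S T : Finset ℕ} {ℓ n k : ℕ} {v : ℕ → ℕ}

theorem zero_notMem_of_subset_Icc (hS : S ⊆ Icc 1 n) : 0 ∉ S :=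
  fun h0 => by simpa using hS h0

theorem comp_mem_valueFiber (e : S ≃o T) (hS : S ⊆ Icc 1 n) (hT : T ⊆ Icc 1 k)
    (hv : v ∈ valueFiber J ℓ n S) : extendByZero e ∘ v ∈ valueFiber J ℓ k T := by
  simp only [valueFiber, mem_filter, mem_seqsFinset] at hv ⊢
  obtain ⟨⟨-, hzero⟩, hDes, himage⟩ := hv
  have hvS : ∀ p ∈ Icc 1 ℓ, v p ∈ S := fun p hp => himage ▸ mem_image_of_mem v hp
  refine ⟨⟨fun p hp => hT (extendByZero_mem e (hvS p hp)), fun p hp => ?_⟩, ?_, ?_⟩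
  · simp [hzero p hp, extendByZero_of_notMem e (zero_notMem_of_subset_Icc hS)]
  · rw [Des_comp (strictMonoOn_extendByZero e) hvS, hDes]
  · rw [← image_image, himage, image_extendByZero]

theorem symm_comp_comp_of_mem_valueFiber (e : S ≃o T) (hS : S ⊆ Icc 1 n) (hT : T ⊆ Icc 1 k)
    (hv : v ∈ valueFiber J ℓ n S) : extendByZero e.symm ∘ extendByZero e ∘ v = v := by
  simp only [valueFiber, mem_filter, mem_seqsFinset] at hv
  obtain ⟨⟨-, hzero⟩, -, himage⟩ := hv
  funext p
  by_cases hp : p ∈ Icc 1 ℓ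
  · exact extendByZero_symm_extendByZero e (himage ▸ mem_image_of_mem v hp)
  · simp [hzero p hp, extendByZero_of_notMem e (zero_notMem_of_subset_Icc hS),
      extendByZero_of_notMem e.symm (zero_notMem_of_subset_Icc hT)]

theorem card_valueFiber_congr (e : S ≃o T) (hS : S ⊆ Icc 1 n) (hT : T ⊆ Icc 1 k) :
    #(valueFiber J ℓ n S) = #(valueFiber J ℓ k T) :=
  card_nbij' (extendByZero e ∘ ·) (extendByZero e.symm ∘ ·)
    (fun _ hv => comp_mem_valueFiber e hS hT hv)
    (fun _ hw => comp_mem_valueFiber e.symm hT hS hw)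
    (fun _ hv => symm_comp_comp_of_mem_valueFiber e hS hT hv)
    (fun _ hw => by simpa using symm_comp_comp_of_mem_valueFiber e.symm hT hS hw)

theorem card_valueFiber_eq (hS : S ⊆ Icc 1 n) :
    #(valueFiber J ℓ n S) = #(valueFiber J ℓ #S (Icc 1 #S)) :=
  card_valueFiber_congr ((S.orderIsoOfFin rfl).symm.trans ((Icc 1 #S).orderIsoOfFin (by simp)))
    hS subset_rfl

theorem valueFiber_Icc_eq_empty (h : ℓ < k) : valueFiber J ℓ k (Icc 1 k) = ∅ := by
  refine eq_empty_of_forall_notMem fun v hv => ?_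
  have := card_image_le (s := Icc 1 ℓ) (f := v)
  rw [(mem_filter.1 hv).2.2] at this
  simp at this
  omega

end ValueFiber

theorem card_filter_Des_eq_sum (J : Finset ℕ) (ℓ k : ℕ) :
    #{v ∈ seqsFinset ℓ k | Des ℓ v = ↑J}
      = ∑ i ∈ range (k + 1), k.choose i * #(valueFiber J ℓ i (Icc 1 i)) := by
  rw [card_eq_sum_card_fiberwise (f := fun v => (Icc 1 ℓ).image v) (t := (Icc 1 k).powerset)]
  · simp only [filter_filter]
    change ∑ S ∈ _, #(valueFiber J ℓ k S) = _
    rw [sum_congr rfl fun S hS => card_valueFiber_eq (mem_powerset.1 hS),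
      sum_powerset_apply_card fun i => #(valueFiber J ℓ i (Icc 1 i))]
    simp
  · intro v hv
    simp only [coe_filter, mem_seqsFinset, Set.mem_ofPred_eq, coe_powerset, Set.mem_preimage,
      Set.mem_powerset_iff, coe_subset] at hv ⊢
    intro x hx
    obtain ⟨p, hp, rfl⟩ := mem_image.1 hx
    exact hv.1.1 p hp

theorem exists_eval_eq_card_filter_Des (J : Finset ℕ) (ℓ : ℕ) :
    ∃ p : ℚ[X], ∀ k : ℕ, p.eval (k : ℚ) = #{v ∈ seqsFinset ℓ k | Des ℓ v = ↑J} := by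
  set E : ℕ → ℚ := fun i => #(valueFiber J ℓ i (Icc 1 i))
  obtain ⟨p, hp⟩ := exists_eval_eq_sum_mul_choose E (range (ℓ + 1))
  refine ⟨p, fun k => ?_⟩
  have hℓ : ∑ i ∈ range (ℓ + 1), E i * k.choose i = ∑ i ∈ range (k + ℓ + 1), E i * k.choose i :=
    sum_subset (range_subset_range.2 (by omega)) fun i _ hi => by
      simp [E, valueFiber_Icc_eq_empty (show ℓ < i by simpa using hi)]
  have hk : ∑ i ∈ range (k + 1), E i * k.choose i = ∑ i ∈ range (k + ℓ + 1), E i * k.choose i :=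
    sum_subset (range_subset_range.2 (by omega)) fun i _ hi => by
      simp [Nat.choose_eq_zero_of_lt (show k < i by simpa using hi)]
  rw [hp, card_filter_Des_eq_sum, hℓ, ← hk]
  push_cast
  exact sum_congr rfl fun _ _ => mul_comm _ _

def truncate (m : ℕ) (v : ℕ → ℕ) (p : ℕ) : ℕ := if p ≤ m then v p else 0

def padOnes (m ℓ : ℕ) (u : ℕ → ℕ) (p : ℕ) : ℕ := if p ≤ m then u p else if p ≤ ℓ then 1 else 0

section Splitting

variable {J : Finset ℕ} {ℓ m n : ℕ} {u v : ℕ → ℕ}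

theorem eq_one_of_forall_notMem_Des (hv : v ∈ Seqs ℓ n) (hdes : ∀ i, m < i → i ∉ Des ℓ v)
    (hvℓ : v ℓ = 1) {p : ℕ} (hmp : m < p) (hpℓ : p ≤ ℓ) : v p = 1 := by
  have hmono : MonotoneOn v (Set.Icc (m + 1) ℓ) :=
    monotoneOn_of_le_add_one Set.ordConnected_Icc fun a _ ha ha1 => by
      simp only [Set.mem_Icc] at ha ha1
      have hna := hdes a (by omega)
      simp only [Des, Set.mem_ofPred_eq, not_and, not_lt] at hna
      exact hna (by omega) (by omega)
  have hle := hmono ⟨by omega, hpℓ⟩ ⟨by omega, le_rfl⟩ hpℓ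
  have hpos := hv.1 p (by simp; omega)
  simp only [mem_Icc] at hpos
  omega

theorem Des_padOnes (hu : u ∈ Seqs m n) (hum : u m ≠ 1) (hm : 1 ≤ m) (hmℓ : m < ℓ) :
    Des ℓ (padOnes m ℓ u) = insert m (Des m u) := by
  have hum : 2 ≤ u m := by
    have := hu.1 m (by simp [hm])
    simp only [mem_Icc] at this
    omega
  ext i
  simp only [Des, padOnes, Set.mem_insert_iff, Set.mem_ofPred_eq]
  rcases lt_trichotomy i m with h | rfl | h
  · simp only [h.le, show i + 1 ≤ m by omega, if_true]
    omega
  · simp [show i + 1 ≤ ℓ by omega]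
    omega
  · simp only [show ¬i ≤ m by omega, show ¬i + 1 ≤ m by omega, if_false]
    split_ifs <;> omega

theorem truncate_padOnes (hu : u ∈ Seqs m n) : truncate m (padOnes m ℓ u) = u := by
  funext p
  by_cases hp : p ≤ m
  · simp [truncate, padOnes, hp]
  · simp [truncate, hp, hu.2 p (by simp; omega)]


theorem padOnes_truncate (hv : v ∈ Seqs ℓ n) (hdes : ∀ i, m < i → i ∉ Des ℓ v) (hvℓ : v ℓ = 1) :
    padOnes m ℓ (truncate m v) = v := by
  funext p
  simp only [padOnes, truncate]
  split_ifs with h1 h2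
  · rfl
  · exact (eq_one_of_forall_notMem_Des hv hdes hvℓ (by omega) h2).symm
  · exact (hv.2 p (by simp; omega)).symm

theorem padOnes_mem_Seqs (hu : u ∈ Seqs m n) (hmℓ : m ≤ ℓ) (hn : 1 ≤ n) : padOnes m ℓ u ∈ Seqs ℓ n := by
  refine ⟨fun p hp => ?_, fun p hp => ?_⟩ <;> simp only [mem_Icc, not_and_or, not_le] at hp
  · by_cases hpm : p ≤ m
    · simpa [padOnes, hpm] using hu.1 p (by simp; omega)
    · simp [padOnes, hpm, hp.2, hn]
  · by_cases hpm : p ≤ m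
    · simpa [padOnes, hpm] using hu.2 p (by simp; omega)
    · simp [padOnes, hpm]
      omega

theorem truncate_mem_Seqs (hv : v ∈ Seqs ℓ n) (hmℓ : m ≤ ℓ) : truncate m v ∈ Seqs m n := by
  refine ⟨fun p hp => ?_, fun p hp => ?_⟩ <;> simp only [mem_Icc, not_and_or, not_le] at hp
  · simpa [truncate, hp.2] using hv.1 p (by simp; omega)
  · by_cases hpm : p ≤ m
    · simpa [truncate, hpm] using hv.2 p (by simp; omega)
    · simp [truncate, hpm]

theorem Des_truncate (hmℓ : m ≤ ℓ) (v : ℕ → ℕ) : Des m (truncate m v) = {i ∈ Des ℓ v | i < m} := by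
  rw [Des_congr (v := truncate m v) (w := v) fun p _ hp => if_pos hp, Des_of_le hmℓ]

theorem card_filter_Des_eq_one (hmJ : m ∈ J) (hJm : ∀ x ∈ J, x ≤ m) (hm : 1 ≤ m) (hmℓ : m < ℓ)
    (hn : 1 ≤ n) :
    #{v ∈ seqsFinset ℓ n | Des ℓ v = ↑J ∧ v ℓ = 1}
      = #{u ∈ seqsFinset m n | Des m u = ↑(J.erase m) ∧ u m ≠ 1} := by
  have hdes : ∀ v, Des ℓ v = ↑J → ∀ i, m < i → i ∉ Des ℓ v := fun v hDes i hi hiJ => by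
    rw [hDes, mem_coe] at hiJ
    exact absurd (hJm i hiJ) (by omega)
  refine card_nbij' (truncate m) (padOnes m ℓ) (fun v hv => ?_) (fun u hu => ?_)
    (fun v hv => ?_) (fun u hu => ?_) <;>
    simp only [coe_filter, mem_seqsFinset, Set.mem_ofPred_eq] at *
  · obtain ⟨hvS, hDes, hvℓ⟩ := hv
    refine ⟨truncate_mem_Seqs hvS hmℓ.le, ?_, ?_⟩
    · rw [Des_truncate hmℓ.le, hDes, coe_erase]
      ext i
      simp only [mem_coe, Set.mem_sdiff, Set.mem_singleton_iff]
      exact ⟨fun h => ⟨h.1, h.2.ne⟩, fun h => ⟨h.1, lt_of_le_of_ne (hJm i h.1) h.2⟩⟩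
    · have hdesm : m ∈ Des ℓ v := by rw [hDes]; exact hmJ
      have hone := eq_one_of_forall_notMem_Des hvS (hdes v hDes) hvℓ (p := m + 1) (by omega) hmℓ
      simp only [truncate, le_refl, if_true]
      exact fun h => absurd hdesm.2.2 (by omega)
  · obtain ⟨huS, hDes, hum⟩ := hu
    refine ⟨padOnes_mem_Seqs huS hmℓ.le hn, ?_, by simp [padOnes]; omega⟩
    rw [Des_padOnes huS hum hm hmℓ, hDes, coe_erase, Set.insert_sdiff_singleton,
      Set.insert_eq_of_mem (mem_coe.2 hmJ)]
  · exact padOnes_truncate hv.1 (hdes v hv.2.1) hv.2.2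
  · exact truncate_padOnes hu.1

end Splitting

theorem card_filter_Des_eq_add {J : Finset ℕ} {ℓ m n : ℕ} (hmJ : m ∈ J) (hJm : ∀ x ∈ J, x ≤ m)
    (hm : 1 ≤ m) (hmℓ : m < ℓ) (hn : 1 ≤ n) :
    #{v ∈ seqsFinset ℓ n | Des ℓ v = ↑J}
      = #{v ∈ seqsFinset ℓ n | Des ℓ v = ↑J ∧ v ℓ ≠ 1}
        + #{u ∈ seqsFinset m n | Des m u = ↑(J.erase m) ∧ u m ≠ 1} := by
  rw [← card_filter_Des_eq_one hmJ hJm hm hmℓ hn,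
    ← card_filter_add_card_filter_not (p := fun v => v ℓ ≠ 1)]
  simp only [filter_filter, not_not]

theorem sup_id_mem {s : Finset ℕ} (hs : s.Nonempty) : s.sup id ∈ s := by
  simpa using sup_mem_of_nonempty (f := id) hs

theorem Ncount_add_Ncount_erase {I : Finset ℕ} (hI : 2 ≤ #I) (hpos : ∀ x ∈ I, 1 ≤ x) {n : ℕ}
    (hn : 1 ≤ n) :
    Ncount I n + Ncount (I.erase (I.sup id)) n
      = #{v ∈ seqsFinset (I.sup id) n | Des (I.sup id) v = ↑(I.erase (I.sup id))} := by
  have hMI : I.sup id ∈ I := sup_id_mem (card_pos.1 (by omega))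
  set J := I.erase (I.sup id)
  have hmJ : J.sup id ∈ J := sup_id_mem (card_pos.1 (by rw [card_erase_of_mem hMI]; omega))
  have hmM : J.sup id < I.sup id :=
    lt_of_le_of_ne (le_sup (f := id) (mem_of_mem_erase hmJ)) (ne_of_mem_erase hmJ)
  rw [Ncount, Ncount, ncard_seqs_filter, ncard_seqs_filter,
    card_filter_Des_eq_add hmJ (fun x hx => le_sup (f := id) hx)
      (hpos _ (mem_of_mem_erase hmJ)) hmM hn]

/-- if `t ≥ 2` and `I⁻ = I \ {α_t}`, and `c`, `c'` are the coefficients of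
`N(I,n)` resp. `N(I⁻,n)` in the binomial basis `(C(n,i))_i`, then `c_0(I) = -c_0(I⁻)`. -/
theorem stmt_19 (I : Finset ℕ) (hI : 2 ≤ I.card) (hIpos : ∀ x ∈ I, 1 ≤ x)
    (c c' : ℕ → ℚ)
    (hc : ∀ n : ℕ, 1 ≤ n →
      (Ncount I n : ℚ) = ∑ i ∈ Finset.range (I.sup id + 1), c i * (n.choose i : ℚ))
    (hc' : ∀ n : ℕ, 1 ≤ n →
      (Ncount (I.erase (I.sup id)) n : ℚ) =
        ∑ i ∈ Finset.range ((I.erase (I.sup id)).sup id + 1), c' i * (n.choose i : ℚ)) :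
    c 0 = - c' 0 := by
  obtain ⟨p, hp⟩ := exists_eval_eq_sum_mul_choose c (range (I.sup id + 1))
  obtain ⟨p', hp'⟩ := exists_eval_eq_sum_mul_choose c' (range ((I.erase (I.sup id)).sup id + 1))
  obtain ⟨q, hq⟩ := exists_eval_eq_card_filter_Des (I.erase (I.sup id)) (I.sup id)
  have hsum : p + p' = q := eq_of_eval_natCast_eq fun n hn => by
    rw [eval_add, hp, hp', hq, ← hc n hn, ← hc' n hn, ← Ncount_add_Ncount_erase hI hIpos hn, Nat.cast_add]
  have hM : 1 ≤ I.sup id := hIpos _ (sup_id_mem (card_pos.1 (by omega)))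
  have h0 := congrArg (eval ((0 : ℕ) : ℚ)) hsum
  rw [eval_add, hp, hp', hq, seqsFinset_zero hM, sum_range_mul_choose_zero,
    sum_range_mul_choose_zero] at h0
  simpa [eq_neg_iff_add_eq_zero] using h0
end
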